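/- Let n ≥ 1 and let λ = (λ_0, …, λ_{n−1}) ∈ ℝ_{>0}^n be transverse to 𝐠_0, i.e., Re(q_λ(p, 𝐠_0 p)) > 0 for every nonzero p ∈ ℂ^{2n}. For 0 ≤ a ≤ 2n−1, let c(a) ∈ ℂ^{2n} be the coefficient vector (in the basis Z^k W^{2n−1−k}) of the polynomial (Z + W)^a (i(Z − W))^{2n−1−a}, i.e., of the monomial X^a Y^{2n−1−a} expressed in the variables X = Z + W, Y = i(Z − W). Then 𝐠_0 · c(a) = (2a − 2n + 1) c(a), and (2a − 2n + 1) · Re( q_λ(c(a), c(a)) ) > 0; in particular Re(q_λ(c(a), c(a))) < 0 whenever a < n. -/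

import Mathlib

open Finset

/-- The ℝ-bilinear form `q_λ` on coefficient vectors of homogeneous polynomials of
degree `2n-1`. -/
noncomputable def qForm (n : ℕ) (lam : ℕ → ℝ) (p q : ℕ → ℂ) : ℂ :=
  (1/2) * ∑ k ∈ Finset.range n,
    (lam k : ℂ) * (p (2*k) * (starRingEnd ℂ) (q (2*k+1)) + q (2*k) * (starRingEnd ℂ) (p (2*k+1)))

/-- The operator `𝐠₀` on coefficient vectors: `(𝐠₀ p)_m = (m+1) p_{m+1} + (2n−m) p_{m−1}`,
with `p_{−1} = 0`. -/
noncomputable def gZero (n : ℕ) (p : ℕ → ℂ) : ℕ → ℂ :=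
  fun m => ((m : ℂ) + 1) * p (m+1) + ((2*n : ℂ) - (m : ℂ)) * (if m = 0 then 0 else p (m-1))

/-- The coefficient vector of a polynomial in `ℂ[Z,W]`, read off in the basis
`Z^k W^{2n−1−k}` (`Z` is variable 0 and `W` is variable 1). -/
noncomputable def coeffVec (n : ℕ) (Q : MvPolynomial (Fin 2) ℂ) : ℕ → ℂ :=
  fun k => MvPolynomial.coeff (Finsupp.single 0 k + Finsupp.single 1 (2*n - 1 - k)) Q

/-- The coefficient vector of the monomial `X^a Y^{2n−1−a}` written in the variables
`Z, W`, i.e. of `(Z + W)^a (i(Z − W))^{2n−1−a}`. -/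
noncomputable def cVec (n : ℕ) (a : ℕ) : ℕ → ℂ :=
  coeffVec n ((MvPolynomial.X 0 + MvPolynomial.X 1) ^ a *
    (MvPolynomial.C Complex.I * (MvPolynomial.X 0 - MvPolynomial.X 1)) ^ (2*n - 1 - a))

open MvPolynomial

section Helpers

lemma my_coeff_pderiv (i : Fin 2) (μ : Fin 2 →₀ ℕ) (Q : MvPolynomial (Fin 2) ℂ) :
    MvPolynomial.coeff μ (MvPolynomial.pderiv i Q)
      = ((μ i : ℂ) + 1) * MvPolynomial.coeff (μ + Finsupp.single i 1) Q := by
  induction Q using MvPolynomial.induction_on' with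
  | add p q hp hq => simp [coeff_add, hp, hq]; ring
  | monomial s a =>
    rw [pderiv_monomial, coeff_monomial, coeff_monomial]
    by_cases h2 : s = μ + Finsupp.single i 1
    · subst h2
      simp only [add_tsub_cancel_right, if_true, eq_self_iff_true]
      simp [Finsupp.single_apply]
      ring
    · rw [if_neg h2, mul_zero]
      by_cases h3 : s - Finsupp.single i 1 = μ
      · rw [if_pos h3]
        by_cases h4 : s i = 0
        · simp [h4]
        · exfalso
          apply h2
          ext j
          have hj := DFunLike.congr_fun h3 j
          simp only [Finsupp.tsub_apply, Finsupp.coe_add, Pi.add_apply,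
            Finsupp.single_apply] at hj ⊢
          rcases eq_or_ne i j with rfl | hij
          · simp at hj ⊢; omega
          · simp [hij] at hj ⊢; omega
      · rw [if_neg h3]

lemma degree_fin2 (d : Fin 2 →₀ ℕ) : d.degree = d 0 + d 1 := by
  rw [Finsupp.degree_apply, Finset.sum_subset (Finset.subset_univ _)]
  · simp [Fin.sum_univ_two]
  · intro i _ hi
    simpa using Finsupp.notMem_support_iff.mp hi

lemma pair_apply (k l : ℕ) (j : Fin 2) :
    (Finsupp.single (0:Fin 2) k + Finsupp.single (1:Fin 2) l) j
      = if j = 0 then k else l := by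
  fin_cases j <;> simp [Finsupp.single_apply]

noncomputable abbrev pr (k l : ℕ) : Fin 2 →₀ ℕ :=
  Finsupp.single 0 k + Finsupp.single 1 l

lemma pr_degree (k l : ℕ) : (pr k l).degree = k + l := by
  rw [degree_fin2]
  simp [pair_apply]

lemma pr_sub_e1 (k l : ℕ) : pr k l - Finsupp.single 1 1 = pr k (l-1) := by
  ext j
  fin_cases j <;> simp [Finsupp.tsub_apply, Finsupp.single_apply]

lemma pr_sub_e0 (k l : ℕ) : pr k l - Finsupp.single 0 1 = pr (k-1) l := by
  ext j
  fin_cases j <;> simp [Finsupp.tsub_apply, Finsupp.single_apply]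

lemma pr_add_e0 (k l : ℕ) : pr k l + Finsupp.single 0 1 = pr (k+1) l := by
  ext j
  fin_cases j <;> simp [Finsupp.single_apply]

lemma pr_add_e1 (k l : ℕ) : pr k l + Finsupp.single 1 1 = pr k (l+1) := by
  ext j
  fin_cases j <;> simp [Finsupp.single_apply]

lemma mem_support_pr_1 (k l : ℕ) : (1 : Fin 2) ∈ (pr k l).support ↔ l ≠ 0 := by
  rw [Finsupp.mem_support_iff]
  simp [pair_apply]

lemma mem_support_pr_0 (k l : ℕ) : (0 : Fin 2) ∈ (pr k l).support ↔ k ≠ 0 := by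
  rw [Finsupp.mem_support_iff]
  simp [pair_apply]

lemma LOp_eq (a b : ℕ) :
    X 1 * pderiv 0 ((X 0 + X 1 : MvPolynomial (Fin 2) ℂ)^a * (C Complex.I * (X 0 - X 1))^b)
    + X 0 * pderiv 1 ((X 0 + X 1 : MvPolynomial (Fin 2) ℂ)^a * (C Complex.I * (X 0 - X 1))^b)
    = C ((a:ℂ) - (b:ℂ)) * ((X 0 + X 1)^a * (C Complex.I * (X 0 - X 1))^b) := by
  have hA : (a : MvPolynomial (Fin 2) ℂ) * (X 0 + X 1)^(a-1) * (X 0 + X 1)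
      = (a : MvPolynomial (Fin 2) ℂ) * (X 0 + X 1)^a := by
    cases a with
    | zero => simp
    | succ k => rw [Nat.add_sub_cancel, mul_assoc, ← pow_succ]
  have hB : (b : MvPolynomial (Fin 2) ℂ) * (C Complex.I * (X 0 - X 1))^(b-1)
        * (C Complex.I * (X 0 - X 1))
      = (b : MvPolynomial (Fin 2) ℂ) * (C Complex.I * (X 0 - X 1))^b := by
    cases b with
    | zero => simp
    | succ k => rw [Nat.add_sub_cancel, mul_assoc, ← pow_succ]
  simp only [pderiv_mul, pderiv_pow, map_add, map_sub, pderiv_C_mul, pderiv_X_self,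
    pderiv_X_of_ne (by decide : (1:Fin 2) ≠ 0), pderiv_X_of_ne (by decide : (0:Fin 2) ≠ 1),
    pderiv_C, map_natCast]
  linear_combination (C Complex.I * (X 0 - X 1) : MvPolynomial (Fin 2) ℂ)^b * hA
    - (X 0 + X 1 : MvPolynomial (Fin 2) ℂ)^a * hB

lemma coeffVec_eq (n : ℕ) (Q : MvPolynomial (Fin 2) ℂ) (k : ℕ) :
    coeffVec n Q k = MvPolynomial.coeff (pr k (2*n-1-k)) Q := rfl

lemma gZero_coeffVec (n : ℕ) (hn : 1 ≤ n) (Q : MvPolynomial (Fin 2) ℂ)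
    (hQ : Q.IsHomogeneous (2*n-1)) (m : ℕ) :
    gZero n (coeffVec n Q) m
      = coeffVec n (X 1 * pderiv 0 Q + X 0 * pderiv 1 Q) m := by
  have hd1 : 2*n-1 + 1 = 2*n := by omega
  have T1 : MvPolynomial.coeff (pr m (2*n-1 - m)) (X 1 * pderiv 0 Q)
      = ((m:ℂ)+1) * coeffVec n Q (m+1) := by
    rw [coeff_X_mul']
    by_cases h : m < 2*n-1
    · rw [if_pos ((mem_support_pr_1 _ _).2 (by omega)), pr_sub_e1, my_coeff_pderiv, pr_add_e0,
        coeffVec_eq]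
      rw [show 2*n-1 - (m+1) = 2*n-1 - m - 1 by omega]
      congr 1
      simp [pair_apply]
    · rw [if_neg (by rw [mem_support_pr_1]; omega)]
      rw [coeffVec_eq, hQ.coeff_eq_zero (by rw [pr_degree]; omega), mul_zero]
  have T2 : MvPolynomial.coeff (pr m (2*n-1 - m)) (X 0 * pderiv 1 Q)
      = ((2*n:ℂ) - (m:ℂ)) * (if m = 0 then 0 else coeffVec n Q (m-1)) := by
    rw [coeff_X_mul']
    by_cases h0 : m = 0
    · subst h0
      rw [if_neg (by rw [mem_support_pr_0]; omega), if_pos rfl, mul_zero]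
    · rw [if_pos ((mem_support_pr_0 _ _).2 h0), pr_sub_e0, my_coeff_pderiv, pr_add_e1,
        if_neg h0, coeffVec_eq]
      by_cases hm : m ≤ 2*n-1
      · rw [show (pr (m-1) (2*n-1-m)) 1 = 2*n-1-m by simp [pair_apply],
          show 2*n-1-m+1 = 2*n-1-(m-1) by omega]
        congr 1
        rw [Nat.cast_sub hm, Nat.cast_sub (by omega : 1 ≤ 2*n)]
        push_cast
        ring
      · rw [show (pr (m-1) (2*n-1-m)) 1 = 2*n-1-m by simp [pair_apply],
          show 2*n-1-m = 0 by omega]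
        rcases eq_or_lt_of_le (by omega : 2*n ≤ m) with he | hl
        · rw [hQ.coeff_eq_zero (d := pr (m-1) (0+1)) (by rw [pr_degree]; omega), mul_zero,
            ← he, show (2*(n:ℂ) - ((2*n:ℕ):ℂ)) = 0 by push_cast; ring, zero_mul]
        · rw [hQ.coeff_eq_zero (d := pr (m-1) (0+1)) (by rw [pr_degree]; omega), mul_zero,
            hQ.coeff_eq_zero (d := pr (m-1) (2*n-1-(m-1))) (by rw [pr_degree]; omega), mul_zero]
  calc gZero n (coeffVec n Q) m
      = ((m:ℂ)+1) * coeffVec n Q (m+1)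
        + ((2*n:ℂ) - (m:ℂ)) * (if m = 0 then 0 else coeffVec n Q (m-1)) := rfl
    _ = MvPolynomial.coeff (pr m (2*n-1 - m)) (X 1 * pderiv 0 Q)
        + MvPolynomial.coeff (pr m (2*n-1 - m)) (X 0 * pderiv 1 Q) := by rw [T1, T2]
    _ = _ := by rw [coeffVec_eq, coeff_add]

end Helpers

/-- The coefficient vectors `c(a)` of the monomials `X^a Y^{2n−1−a}` are eigenvectors of
`𝐠₀` with eigenvalue `2a − 2n + 1`, and for a weight `λ` transverse to `𝐠₀` one has
`(2a − 2n + 1) Re(q_λ(c(a), c(a))) > 0`; in particular `Re(q_λ(c(a), c(a))) < 0` for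
`a < n`. -/
theorem monomial_eigenvector_sign (n : ℕ) (hn : 1 ≤ n)
    (lam : ℕ → ℝ) (hpos : ∀ k < n, 0 < lam k)
    (htrans : ∀ p : ℕ → ℂ, (∀ k, 2*n ≤ k → p k = 0) → p ≠ 0 →
      0 < (qForm n lam p (gZero n p)).re)
    (a : ℕ) (ha : a ≤ 2*n - 1) :
    (∀ m, gZero n (cVec n a) m = (2*(a : ℂ) - 2*(n : ℂ) + 1) * cVec n a m) ∧
    0 < (2*(a : ℝ) - 2*(n : ℝ) + 1) * (qForm n lam (cVec n a) (cVec n a)).re ∧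
    (a < n → (qForm n lam (cVec n a) (cVec n a)).re < 0) := by
  set b := 2*n - 1 - a with hb
  set P : MvPolynomial (Fin 2) ℂ :=
    (X 0 + X 1) ^ a * (C Complex.I * (X 0 - X 1)) ^ b with hPdef
  have hcast : ((b : ℕ) : ℂ) = 2*(n:ℂ) - 1 - (a:ℂ) := by
    rw [hb, Nat.cast_sub ha, Nat.cast_sub (by omega : 1 ≤ 2*n)]
    push_cast; ring
  set c : ℂ := 2*(a : ℂ) - 2*(n : ℂ) + 1 with hcdef
  -- homogeneity
  have hf : (X 0 + X 1 : MvPolynomial (Fin 2) ℂ).IsHomogeneous 1 :=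
    (isHomogeneous_X _ _).add (isHomogeneous_X _ _)
  have hg : (C Complex.I * (X 0 - X 1) : MvPolynomial (Fin 2) ℂ).IsHomogeneous 1 :=
    ((isHomogeneous_X _ _).sub (isHomogeneous_X _ _)).C_mul _
  have hP : P.IsHomogeneous (2*n-1) := by
    have := (hf.pow a).mul (hg.pow b)
    simpa [mul_one, hb, show a + (2*n-1-a) = 2*n-1 by omega] using this
  -- cVec equals coeffVec of P
  have hcv : cVec n a = coeffVec n P := rfl
  -- Part 1: eigenvector property
  have h1 : ∀ m, gZero n (cVec n a) m = c * cVec n a m := by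
    intro m
    rw [hcv, gZero_coeffVec n hn P hP m, hPdef, LOp_eq a b, coeffVec_eq, coeff_C_mul,
      ← coeffVec_eq]
    congr 1
    rw [hcast, hcdef]; ring
  refine ⟨h1, ?_⟩
  -- P ≠ 0 and cVec ≠ 0
  have hf0 : (X 0 + X 1 : MvPolynomial (Fin 2) ℂ) ≠ 0 := by
    intro h
    have := congrArg (MvPolynomial.coeff (Finsupp.single (0 : Fin 2) 1)) h
    simp [coeff_single_X] at this
  have hg0 : (C Complex.I * (X 0 - X 1) : MvPolynomial (Fin 2) ℂ) ≠ 0 := by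
    refine mul_ne_zero ?_ ?_
    · simpa using Complex.I_ne_zero
    · intro h
      have := congrArg (MvPolynomial.coeff (Finsupp.single (0 : Fin 2) 1)) h
      simp [coeff_single_X] at this
  have hPne : P ≠ 0 := mul_ne_zero (pow_ne_zero _ hf0) (pow_ne_zero _ hg0)
  have hvanish : ∀ k, 2*n ≤ k → cVec n a k = 0 := by
    intro k hk
    rw [hcv, coeffVec_eq]
    exact hP.coeff_eq_zero (by rw [pr_degree]; omega)
  have hne : cVec n a ≠ 0 := by
    intro h0
    obtain ⟨μ, hμ⟩ := MvPolynomial.exists_coeff_ne_zero hPne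
    have hdeg : μ 0 + μ 1 = 2*n - 1 := by
      have h2 := hP hμ
      have h3 : μ.degree = 2*n - 1 := by rw [Finsupp.degree_eq_weight_one]; exact h2
      rw [degree_fin2] at h3
      exact h3
    have hμeq : μ = pr (μ 0) (2*n-1-(μ 0)) := by
      ext j
      fin_cases j <;> simp [pair_apply] <;> omega
    apply hμ
    have := congrFun h0 (μ 0)
    rw [hcv, coeffVec_eq] at this
    rw [hμeq]
    simpa using this
  -- transversality applied to cVec
  have htr := htrans (cVec n a) hvanish hne
  have hcc : (starRingEnd ℂ) c = c := by
    rw [hcdef]; simp [map_ofNat]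
  have hq : qForm n lam (cVec n a) (gZero n (cVec n a))
      = c * qForm n lam (cVec n a) (cVec n a) := by
    have hgfun : gZero n (cVec n a) = fun m => c * cVec n a m := funext h1
    simp only [hgfun, qForm, Finset.mul_sum, map_mul, hcc]
    apply Finset.sum_congr rfl
    intro k _
    ring
  set r : ℝ := 2*(a : ℝ) - 2*(n : ℝ) + 1 with hrdef
  have hcr : c = (r : ℂ) := by rw [hcdef, hrdef]; push_cast; ring
  rw [hq, hcr, Complex.re_ofReal_mul] at htr
  refine ⟨htr, fun han => ?_⟩
  have hr : r < 0 := by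
    have : (a:ℝ) + 1 ≤ (n:ℝ) := by exact_mod_cast han
    rw [hrdef]; linarith
  nlinarith [htr, hr]
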